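/- arXiv:0808.2932 — 5 statements merged into one kernel-verified Lean document; each statement's English description precedes it below -/
import Mathlib

section
/- Let G be an equationally Noetherian group, X = {x_1, ..., x_n} a finite set of variables, and p an ideal in G[X] (a normal subgroup of G[X] with p ∩ G = 1). Then the algebraic set V_G(p) is irreducible if and only if R(p) is a prime ideal in G[X]. -/
/-!
STATEMENT 3 (Lemma on prime ideals): Let `G` be an equationally Noetherian group,
`X = {x_1, ..., x_n}` a finite set of variables, and `p` an ideal in `G[X]` (a normal
subgroup with `p ∩ G = 1`). Then the algebraic set `V_G(p)` is irreducible iff the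
radical `R(p) = I(V_G(p))` is a prime ideal in the `G`-group `G[X]`.
-/


/-- `G[X] = G * F(X)`, the coefficient group of equations in `m` variables. -/
abbrev GX (G : Type*) [Group G] (m : ℕ) := Monoid.Coprod G (FreeGroup (Fin m))

/-- Evaluation of an element of `G[X]` at a tuple `a ∈ G^m`. -/
noncomputable def evalHom {G : Type*} [Group G] {m : ℕ} (a : Fin m → G) : GX G m →* G :=
  Monoid.Coprod.lift (MonoidHom.id G) (FreeGroup.lift a)

/-- The algebraic set defined by a system of equations `S = 1`. -/
def VG {G : Type*} [Group G] {m : ℕ} (S : Set (GX G m)) : Set (Fin m → G) :=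
  {a | ∀ s ∈ S, evalHom a s = 1}

/-- A subset of `G^m` is algebraic if it is the solution set of some system. -/
def AlgebraicSet {G : Type*} [Group G] {m : ℕ} (Y : Set (Fin m → G)) : Prop :=
  ∃ S : Set (GX G m), Y = VG S

/-- The Zariski topology on `G^m`: the algebraic sets form a pre-basis of closed sets. -/
def zariskiTopology (G : Type*) [Group G] (m : ℕ) : TopologicalSpace (Fin m → G) :=
  TopologicalSpace.generateFrom {U | ∃ S : Set (GX G m), U = (VG S)ᶜ}

/-- `I(Y)`, the normal subgroup of `G[X]` of all elements vanishing on `Y`;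
for `Y = V(S)` this is the radical `R(S)`. -/
noncomputable def idealOf {G : Type*} [Group G] {m : ℕ} (Y : Set (Fin m → G)) : Subgroup (GX G m) :=
  ⨅ a ∈ Y, (evalHom a).ker

instance idealOf_normal {G : Type*} [Group G] {m : ℕ} (Y : Set (Fin m → G)) :
    (idealOf Y).Normal := by
  constructor
  intro x hx g
  simp only [idealOf, Subgroup.mem_iInf, MonoidHom.mem_ker] at hx ⊢
  intro a ha
  simp [map_mul, hx a ha]

/-- The coordinate group `Γ(Y) = G[X]/I(Y)` of an algebraic set `Y ⊆ G^m`. -/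
abbrev CoordGroup {G : Type*} [Group G] {m : ℕ} (Y : Set (Fin m → G)) :=
  GX G m ⧸ idealOf Y

/-- The canonical embedding `G → Γ(Y)`. -/
noncomputable def coordEmbed {G : Type*} [Group G] {m : ℕ} (Y : Set (Fin m → G)) :
    G →* CoordGroup Y :=
  (QuotientGroup.mk' (idealOf Y)).comp Monoid.Coprod.inl

/-- A group `G` is equationally Noetherian: every system of equations (in finitely many
variables) is equivalent over `G` to a finite subsystem. -/
def EquationallyNoetherian (G : Type*) [Group G] : Prop :=
  ∀ (m : ℕ) (S : Set (GX G m)), ∃ S₀ : Set (GX G m), S₀ ⊆ S ∧ S₀.Finite ∧ VG S₀ = VG S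

/-- The Zariski dimension of a subset `Y ⊆ G^m`: the supremum of lengths `k` of chains
`Z_0 ⊂ Z_1 ⊂ ... ⊂ Z_k` of distinct irreducible nonempty closed subsets of `Y`. -/
noncomputable def zariskiDim {G : Type*} [Group G] {m : ℕ} (Y : Set (Fin m → G)) : ℕ∞ :=
  ⨆ (k : ℕ) (_ : ∃ Z : Fin (k + 1) → Set (Fin m → G), StrictMono Z ∧
      ∀ i, Z i ⊆ Y ∧ @IsIrreducible _ (zariskiTopology G m) (Z i) ∧
        @IsClosed _ (zariskiTopology G m) (Z i)), (k : ℕ∞)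



/-- `H/N` (the quotient of the `G`-group `H`, with distinguished copy of `G` given by
`ι : G →* H`, by the normal subgroup `N`) is `G`-discriminated by `G`: for every finite
subset there is a `G`-homomorphism to `G` (i.e. one fixing `G` pointwise and killing `N`)
injective on it (modulo `N`). -/
def DiscriminatesQuot {G H : Type*} [Group G] [Group H] (ι : G →* H) (N : Subgroup H) : Prop :=
  ∀ K : Finset H, ∃ φ : H →* G, φ.comp ι = MonoidHom.id G ∧ N ≤ φ.ker ∧
    ∀ x ∈ K, ∀ y ∈ K, φ x = φ y → x⁻¹ * y ∈ N

/-- A prime ideal of the `G`-group `H`: a normal subgroup meeting the distinguished copy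
of `G` trivially and such that `H/N` is `G`-discriminated by `G`. -/
def IsPrimeIdeal {G H : Type*} [Group G] [Group H] (ι : G →* H) (N : Subgroup H) : Prop :=
  N.Normal ∧ (∀ g : G, ι g ∈ N → g = 1) ∧ DiscriminatesQuot ι N

/-- The Krull dimension of the `G`-group `H`: the supremum of lengths of chains of
distinct prime ideals. -/
noncomputable def KdimG {G H : Type*} [Group G] [Group H] (ι : G →* H) : ℕ∞ :=
  ⨆ (k : ℕ) (_ : ∃ p : Fin (k + 1) → Subgroup H, StrictMono p ∧ ∀ i, IsPrimeIdeal ι (p i)),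
    (k : ℕ∞)

/-- The projective dimension of the `G`-group `H` (which is `G`-discriminated by `G`):
the supremum of lengths `k` of chains `H = H_0 → H_1 → ... → H_k = G` of proper
`G`-epimorphisms of `G`-groups `G`-discriminated by `G`; such a chain is encoded by the
strictly increasing chain of kernels `N i ≤ H`, with `H/N k ≅ G` as `G`-groups. -/
noncomputable def pdG {G H : Type*} [Group G] [Group H] (ι : G →* H) : ℕ∞ :=
  ⨆ (k : ℕ) (_ : ∃ N : Fin (k + 1) → Subgroup H, StrictMono N ∧ N 0 = ⊥ ∧
      (∀ i, (N i).Normal ∧ (∀ g : G, ι g ∈ N i → g = 1) ∧ DiscriminatesQuot ι (N i)) ∧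
      (∀ h : H, ∃ g : G, (ι g)⁻¹ * h ∈ N (Fin.last k))), (k : ℕ∞)

/-- `A` discriminates `B`: every finite subset of `B` is mapped injectively into `A`
by some homomorphism. -/
def Discriminates (A : Type*) [Group A] (B : Type*) [Group B] : Prop :=
  ∀ K : Finset B, ∃ φ : B →* A, Set.InjOn φ ↑K

/-- The projective dimension `pd(H)` of a group `H`: the supremum of lengths `k` of chains
`H = H_1 → H_2 → ... → H_{k+1}` of proper epimorphisms in which each `H_i` and `H`
mutually discriminate each other; such a chain is encoded by the strictly increasing
chain of kernels `N i`. -/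
noncomputable def projDim (H : Type*) [Group H] : ℕ∞ :=
  ⨆ (k : ℕ) (_ : ∃ (N : Fin (k + 1) → Subgroup H) (hN : ∀ i, (N i).Normal),
      StrictMono N ∧ N 0 = ⊥ ∧
      ∀ i, @Discriminates H _ (H ⧸ N i) (@QuotientGroup.Quotient.group H _ (N i) (hN i)) ∧
        @Discriminates (H ⧸ N i) (@QuotientGroup.Quotient.group H _ (N i) (hN i)) H _),
    (k : ℕ∞)

section Aux

open Monoid

variable {G : Type} [Group G] {n : ℕ}

lemma mem_idealOf {Y : Set (Fin n → G)} {f : GX G n} :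
    f ∈ idealOf Y ↔ ∀ a ∈ Y, evalHom a f = 1 := by
  simp [idealOf, Subgroup.mem_iInf, MonoidHom.mem_ker]

lemma evalHom_eq_of_comp_inl (φ : GX G n →* G)
    (h : φ.comp Monoid.Coprod.inl = MonoidHom.id G) :
    φ = evalHom (fun i => φ (Monoid.Coprod.inr (FreeGroup.of i))) := by
  apply Monoid.Coprod.hom_ext
  · rw [h]; rfl
  · apply FreeGroup.ext_hom
    intro i
    simp [evalHom]

lemma mem_VG_of_ideal_le {p : Subgroup (GX G n)} {a : Fin n → G}
    (h : idealOf (VG (p : Set (GX G n))) ≤ (evalHom a).ker) :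
    a ∈ VG (p : Set (GX G n)) := by
  intro s hs
  exact MonoidHom.mem_ker.mp (h (mem_idealOf.mpr fun b hb => hb s hs))

lemma isClosed_VG (S : Set (GX G n)) : @IsClosed _ (zariskiTopology G n) (VG S) := by
  letI := zariskiTopology G n
  rw [← isOpen_compl_iff]
  exact TopologicalSpace.GenerateOpen.basic _ ⟨S, rfl⟩

lemma exists_finset_of_mem_open {U : Set (Fin n → G)}
    (hU : @IsOpen _ (zariskiTopology G n) U) {b : Fin n → G} (hb : b ∈ U) :
    ∃ F : Finset (GX G n), (∀ f ∈ F, evalHom b f ≠ 1) ∧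
      ∀ a : Fin n → G, (∀ f ∈ F, evalHom a f ≠ 1) → a ∈ U := by
  classical
  letI := zariskiTopology G n
  obtain ⟨t, ⟨fs, ⟨hfin, hsub⟩, rfl⟩, hbt, htU⟩ :=
    (TopologicalSpace.isTopologicalBasis_of_subbasis rfl).exists_subset_of_mem_open hb hU
  have key : ∀ u ∈ fs, ∃ g : GX G n, evalHom b g ≠ 1 ∧
      ∀ a : Fin n → G, evalHom a g ≠ 1 → a ∈ u := by
    intro u hu
    obtain ⟨S, rfl⟩ := hsub hu
    have hbu : b ∈ (VG S)ᶜ := Set.mem_sInter.mp hbt _ hu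
    rw [Set.mem_compl_iff] at hbu
    have : ¬ ∀ s ∈ S, evalHom b s = 1 := hbu
    push_neg at this
    obtain ⟨s, hs, hne⟩ := this
    exact ⟨s, hne, fun a ha haV => ha (haV s hs)⟩
  choose g hg1 hg2 using key
  refine ⟨hfin.toFinset.attach.image
    (fun u => g u.1 (hfin.mem_toFinset.mp u.2)), ?_, ?_⟩
  · intro f hf
    simp only [Finset.mem_image, Finset.mem_attach, true_and] at hf
    obtain ⟨u, rfl⟩ := hf
    exact hg1 _ _
  · intro a ha
    apply htU
    intro u hu
    refine hg2 u hu a (ha _ ?_)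
    simp only [Finset.mem_image, Finset.mem_attach, true_and]
    exact ⟨⟨u, hfin.mem_toFinset.mpr hu⟩, rfl⟩

end Aux

theorem stmt3 {G : Type} [Group G] (hG : EquationallyNoetherian G) (n : ℕ)
    (p : Subgroup (GX G n)) (hnorm : p.Normal)
    (hideal : ∀ g : G, Monoid.Coprod.inl g ∈ p → g = 1) :
    @IsIrreducible _ (zariskiTopology G n) (VG (p : Set (GX G n))) ↔
      IsPrimeIdeal (Monoid.Coprod.inl : G →* GX G n) (idealOf (VG (p : Set (GX G n)))) := by
  classical
  letI := zariskiTopology G n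
  set Y := VG (p : Set (GX G n)) with hY
  constructor
  · intro hirr
    obtain ⟨b, hbY⟩ := hirr.nonempty
    refine ⟨idealOf_normal Y, ?_, ?_⟩
    · intro g hg
      have := mem_idealOf.mp hg b hbY
      simpa [evalHom] using this
    · intro K
      have hex : ∃ a ∈ Y, ∀ x ∈ K, ∀ y ∈ K,
          x⁻¹ * y ∉ idealOf Y → evalHom a (x⁻¹ * y) ≠ 1 := by
        by_contra h
        push_neg at h
        set T : Finset (Set (Fin n → G)) :=
          ((K ×ˢ K).filter (fun q => q.1⁻¹ * q.2 ∉ idealOf Y)).image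
            (fun q => VG {q.1⁻¹ * q.2}) with hT
        have hclosed : ∀ z ∈ T, IsClosed z := by
          intro z hz
          simp only [hT, Finset.mem_image] at hz
          obtain ⟨q, -, rfl⟩ := hz
          exact isClosed_VG _
        have hcover : Y ⊆ ⋃₀ ↑T := by
          intro a ha
          obtain ⟨x, hx, y, hy, hmem, heq⟩ := h a ha
          refine ⟨VG {x⁻¹ * y}, ?_, ?_⟩
          · simp only [hT, Finset.coe_image, Set.mem_image, Finset.coe_filter,
              Set.mem_setOf_eq, Finset.mem_product]
            exact ⟨(x, y), ⟨⟨hx, hy⟩, hmem⟩, rfl⟩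
          · intro s hs
            rw [Set.mem_singleton_iff] at hs
            rw [hs, heq]
        obtain ⟨z, hzT, hYz⟩ := (isIrreducible_iff_sUnion_isClosed.mp hirr) T hclosed hcover
        simp only [hT, Finset.mem_image, Finset.mem_filter, Finset.mem_product] at hzT
        obtain ⟨q, ⟨-, hnm⟩, rfl⟩ := hzT
        exact hnm (mem_idealOf.mpr fun a ha => (hYz ha) _ rfl)
      obtain ⟨a, haY, hgood⟩ := hex
      refine ⟨evalHom a, rfl, ?_, ?_⟩
      · intro f hf
        exact MonoidHom.mem_ker.mpr (mem_idealOf.mp hf a haY)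
      · intro x hx y hy hxy
        by_contra hnm
        exact hgood x hx y hy hnm (by simp [map_mul, map_inv, hxy])
  · rintro ⟨-, -, hdisc⟩
    have point : ∀ (φ : GX G n →* G), φ.comp Monoid.Coprod.inl = MonoidHom.id G →
        idealOf Y ≤ φ.ker → ∃ a : Fin n → G, a ∈ Y ∧ φ = evalHom a := by
      intro φ h1 h2
      have he := evalHom_eq_of_comp_inl φ h1
      refine ⟨_, ?_, he⟩
      rw [he] at h2
      exact mem_VG_of_ideal_le h2
    constructor
    · obtain ⟨φ, h1, hker, -⟩ := hdisc ∅
      obtain ⟨a, haY, -⟩ := point φ h1 hker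
      exact ⟨a, haY⟩
    · rintro u v hu hv ⟨b₁, hb₁Y, hb₁u⟩ ⟨b₂, hb₂Y, hb₂v⟩
      obtain ⟨F₁, hF₁b, hF₁⟩ := exists_finset_of_mem_open hu hb₁u
      obtain ⟨F₂, hF₂b, hF₂⟩ := exists_finset_of_mem_open hv hb₂v
      obtain ⟨φ, h1, hker, hinj⟩ := hdisc (insert 1 (F₁ ∪ F₂))
      obtain ⟨a, haY, hφ⟩ := point φ h1 hker
      have hnot : ∀ f ∈ F₁ ∪ F₂, f ∉ idealOf Y := by
        intro f hf hmem
        rcases Finset.mem_union.mp hf with h | h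
        · exact hF₁b f h (mem_idealOf.mp hmem b₁ hb₁Y)
        · exact hF₂b f h (mem_idealOf.mp hmem b₂ hb₂Y)
      have hne : ∀ f ∈ F₁ ∪ F₂, evalHom a f ≠ 1 := by
        intro f hf heq
        have hφf : φ f = φ 1 := by rw [hφ, map_one, heq]
        have := hinj f (Finset.mem_insert_of_mem hf) 1 (Finset.mem_insert_self _ _) hφf
        rw [mul_one] at this
        exact hnot f hf ((idealOf Y).inv_mem_iff.mp this)
      exact ⟨a, haY, hF₁ a (fun f hf => hne f (Finset.mem_union_left _ hf)),
        hF₂ a (fun f hf => hne f (Finset.mem_union_right _ hf))⟩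
end

section
/- Let G be a group and H a finitely generated G-group that is G-discriminated by G. Then the Krull dimension Kdim_G(H) of H is equal to the projective dimension pd_G(H) of H. -/
/-
Every prime ideal `N` lies in the kernel of a retraction `φ : H → G` of `ι` (apply the
discrimination of `H/N` to the empty set), and such a kernel is itself prime, with
`H/ker φ ≅ G`. As `ι` is injective and `H` is `G`-discriminated, `⊥` is prime too, so
any chain of prime ideals `p₀ < ⋯ < p_k` can have its ends replaced by `⊥` and `ker φ`,
which turns it into a chain of proper `G`-epimorphisms from `H` down to `G` of the same
length. Conversely, the kernels of such a chain form a chain of prime ideals.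
-/

theorem StrictMono.of_le_of_le {α β : Type*} [Preorder α] [Preorder β] {p q : α → β}
    (hp : StrictMono p) (hq_le : ∀ i, ¬IsMax i → q i ≤ p i)
    (hle_q : ∀ j, ¬IsMin j → p j ≤ q j) : StrictMono q :=
  fun _ _ hij => (hq_le _ hij.not_isMax).trans_lt ((hp hij).trans_le (hle_q _ hij.not_isMin))

theorem StrictMono.update_zero_update_last {β : Type*} [Preorder β] {n : ℕ}
    {p : Fin (n + 2) → β} (hp : StrictMono p) {a b : β} (ha : a ≤ p 0)
    (hb : p (Fin.last _) ≤ b) :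
    StrictMono (Function.update (Function.update p 0 a) (Fin.last _) b) := by
  refine hp.of_le_of_le (fun i hi => ?_) (fun j hj => ?_)
  · rw [Function.update_of_ne
      (by rintro rfl; exact hi (isMax_iff_eq_top.mpr (Fin.top_eq_last _).symm))]
    rcases eq_or_ne i 0 with rfl | hi0
    · simpa using ha
    · rw [Function.update_of_ne hi0]
  · rcases eq_or_ne j (Fin.last _) with rfl | hjl
    · simpa using hb
    · rw [Function.update_of_ne hjl,
        Function.update_of_ne (by rintro rfl; exact hj (isMin_iff_eq_bot.mpr bot_eq_zero.symm))]

section GGroup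

variable {G H : Type*} [Group G] [Group H] {ι : G →* H}

theorem DiscriminatesQuot.exists_le_ker {N : Subgroup H} (hN : DiscriminatesQuot ι N) :
    ∃ φ : H →* G, φ.comp ι = MonoidHom.id G ∧ N ≤ φ.ker := by
  obtain ⟨φ, hφι, hN, -⟩ := hN ∅
  exact ⟨φ, hφι, hN⟩

theorem isPrimeIdeal_ker_of_comp_eq_id {φ : H →* G} (hφ : φ.comp ι = MonoidHom.id G) :
    IsPrimeIdeal ι φ.ker := by
  have hφι (g : G) : φ (ι g) = g := DFunLike.congr_fun hφ g
  refine ⟨φ.normal_ker, fun g hg => ?_, fun _ => ⟨φ, hφ, le_rfl, fun x _ y _ hxy => ?_⟩⟩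
  · rwa [MonoidHom.mem_ker, hφι] at hg
  · simp [MonoidHom.mem_ker, hxy]

theorem pdG_le_KdimG : pdG ι ≤ KdimG ι :=
  iSup₂_le fun k ⟨N, hN, _, hprime, _⟩ => le_iSup₂_of_le k ⟨N, hN, hprime⟩ le_rfl

theorem KdimG_le_pdG (hbot : IsPrimeIdeal ι ⊥) : KdimG ι ≤ pdG ι := by
  refine iSup₂_le fun k ⟨p, hp, hprime⟩ => ?_
  obtain _ | m := k
  · exact zero_le
  obtain ⟨φ, hφ, hle⟩ := (hprime (Fin.last _)).2.2.exists_le_ker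
  have h0 : (0 : Fin (m + 2)) ≠ Fin.last _ := (Fin.last_pos).ne
  set N := Function.update (Function.update p 0 ⊥) (Fin.last _) φ.ker
  have hNprime (i : Fin (m + 2)) : IsPrimeIdeal ι (N i) := by
    rcases eq_or_ne i (Fin.last _) with rfl | hil
    · simpa [N] using isPrimeIdeal_ker_of_comp_eq_id hφ
    rcases eq_or_ne i 0 with rfl | hi0
    · simpa [N, h0] using hbot
    · simpa [N, hil, hi0] using hprime i
  refine le_iSup₂_of_le (m + 1)
    ⟨N, hp.update_zero_update_last bot_le hle, by simp [N, h0], hNprime, fun h => ⟨φ h, ?_⟩⟩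
    le_rfl
  have hφι : φ (ι (φ h)) = φ h := DFunLike.congr_fun hφ (φ h)
  simp [N, MonoidHom.mem_ker, hφι]

end GGroup

theorem stmt5_general {G H : Type} [Group G] [Group H] (ι : G →* H) (hinj : Function.Injective ι)
    (hdisc : DiscriminatesQuot ι ⊥) :
    KdimG ι = pdG ι :=
  le_antisymm (KdimG_le_pdG ⟨inferInstance, fun _ hg => hinj (by simpa using hg), hdisc⟩)
    pdG_le_KdimG

theorem stmt5 {G H : Type} [Group G] [Group H] (ι : G →* H) (hinj : Function.Injective ι)
    (hfg : ∃ T : Finset H, Subgroup.closure (Set.range ι ∪ ↑T) = ⊤)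
    (hdisc : DiscriminatesQuot ι ⊥) :
    KdimG ι = pdG ι :=
  stmt5_general ι hinj hdisc
end

section
/- Let G be a torsion-free polycyclic group. Then the projective dimension pd(G) is at most the Hirsch length h(G) of G. -/
/-- `s` is a polycyclic series: a subnormal series from `G` to `1` with cyclic factors
(`c` generates `s i` modulo `s (i+1)`). -/
def IsPolycyclicSeries {G : Type*} [Group G] {k : ℕ} (s : Fin (k + 1) → Subgroup G) : Prop :=
  s 0 = ⊤ ∧ s (Fin.last k) = ⊥ ∧
  (∀ i : Fin k, s i.succ ≤ s i.castSucc) ∧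
  (∀ i : Fin k, ∀ x ∈ s i.castSucc, ∀ y ∈ s i.succ, x⁻¹ * y * x ∈ s i.succ) ∧
  (∀ i : Fin k, ∃ c ∈ s i.castSucc, ∀ x ∈ s i.castSucc, ∃ m : ℤ, (c ^ m)⁻¹ * x ∈ s i.succ)

/-- The factor `s i / s (i+1)` is infinite (cyclic): some element has infinite order
modulo `s (i+1)`. -/
def InfiniteFactor {G : Type*} [Group G] {k : ℕ} (s : Fin (k + 1) → Subgroup G)
    (i : Fin k) : Prop :=
  ∃ x ∈ s i.castSucc, ∀ m : ℤ, m ≠ 0 → x ^ m ∉ s i.succ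

/-- The old Mathlib `Monoid.IsTorsionFree` (removed since), with its old meaning. -/
def Monoid.IsTorsionFree (G : Type*) [Monoid G] : Prop :=
  ∀ g : G, g ≠ 1 → ¬IsOfFinOrder g

/-!
A torsion-free group that discriminates `G ⧸ N` forces `N` to be isolated: `x ^ n ∈ N` with
`n ≠ 0` gives `x ∈ N`. Record for each `N` the infinite factors `s i / s (i+1)` of the
polycyclic series in which `N` has nontrivial image. If `N ≤ M` are recorded by the same
factors, then descending the series shows that every element of `M` has a nonzero power in
`N`: in a cyclic factor met by `N`, some nonzero power of `x` agrees with an element of `N`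
modulo `s (i+1)`; an infinite factor missed by `N` is missed by `M` too; and a finite factor
is killed by a power. For isolated `N` this gives `M = N`, so along a proper chain of kernels
the recorded sets strictly grow.
-/

section Isolation

variable {G : Type*} [Group G]

theorem mem_of_zpow_mem_of_discriminates {A : Type*} [Group A] (hA : Monoid.IsTorsionFree A)
    {N : Subgroup G} [N.Normal] (hd : Discriminates A (G ⧸ N)) {x : G} {n : ℤ} (hn : n ≠ 0)
    (hx : x ^ n ∈ N) : x ∈ N := by
  classical
  obtain ⟨φ, hφ⟩ := hd {(x : G ⧸ N), 1}
  have hφx : φ x = 1 := by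
    by_contra hne
    refine hA _ hne (isOfFinOrder_iff_zpow_eq_one.mpr ⟨n, hn, ?_⟩)
    rw [← map_zpow, ← QuotientGroup.mk_zpow, (QuotientGroup.eq_one_iff _).mpr hx, map_one]
  rw [← QuotientGroup.eq_one_iff]
  exact hφ (by simp) (by simp) (by rw [hφx, map_one])

theorem zpow_mem_of_inv_mul_zpow_mem {N : Subgroup G} [N.Normal] {w y : G} (hw : w ∈ N)
    {m : ℤ} (h : (w⁻¹ * y) ^ m ∈ N) : y ^ m ∈ N := by
  have hwy : ((w⁻¹ * y : G) : G ⧸ N) = y := by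
    rw [QuotientGroup.mk_mul, QuotientGroup.mk_inv, (QuotientGroup.eq_one_iff w).mpr hw, inv_one,
      one_mul]
  rwa [← QuotientGroup.eq_one_iff, QuotientGroup.mk_zpow, ← hwy, ← QuotientGroup.mk_zpow,
    QuotientGroup.eq_one_iff]

end Isolation

theorem IsCyclic.exists_zpow_eq_zpow {Q : Type*} [Group Q] [IsCyclic Q] {u : Q} (hu : u ≠ 1)
    (x : Q) : ∃ n : ℤ, n ≠ 0 ∧ ∃ b : ℤ, x ^ n = u ^ b := by
  obtain ⟨c, hc⟩ := IsCyclic.exists_zpow_surjective (G := Q)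
  obtain ⟨a, rfl⟩ := hc u
  obtain ⟨a', rfl⟩ := hc x
  refine ⟨a, fun ha => hu (by simp [ha]), a', ?_⟩
  simp only [← zpow_mul, mul_comm]

theorem Fin.val_le_of_strictMono {n : ℕ} {f : Fin (n + 1) → ℕ} (hf : StrictMono f)
    (i : Fin (n + 1)) : (i : ℕ) ≤ f i := by
  induction i using Fin.induction with
  | zero => exact Nat.zero_le _
  | succ i ih => 
    have := hf (Fin.castSucc_lt_succ (i := i))
    simp only [Fin.val_succ, Fin.val_castSucc] at ih ⊢
    omega

theorem Subgroup.exists_zpow_inv_mul_zpow_mem {G : Type*} [Group G] {S T : Subgroup G}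
    [(T.subgroupOf S).Normal] [IsCyclic (S ⧸ T.subgroupOf S)] {u x : G} (hu : u ∈ S)
    (huT : u ∉ T) (hx : x ∈ S) : ∃ n : ℤ, n ≠ 0 ∧ ∃ b : ℤ, (u ^ b)⁻¹ * x ^ n ∈ T := by
  have hu1 : ((⟨u, hu⟩ : S) : S ⧸ T.subgroupOf S) ≠ 1 := by
    rwa [Ne, QuotientGroup.eq_one_iff, Subgroup.mem_subgroupOf]
  obtain ⟨n, hn, b, h⟩ := IsCyclic.exists_zpow_eq_zpow hu1 (⟨x, hx⟩ : S)
  refine ⟨n, hn, b, ?_⟩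
  rw [← QuotientGroup.mk_zpow, ← QuotientGroup.mk_zpow, eq_comm, QuotientGroup.eq,
    Subgroup.mem_subgroupOf] at h
  simpa using h

namespace IsPolycyclicSeries

variable {G : Type*} [Group G] {k : ℕ} {s : Fin (k + 1) → Subgroup G}

theorem subgroupOf_normal (hs : IsPolycyclicSeries s) (i : Fin k) :
    ((s i.succ).subgroupOf (s i.castSucc)).Normal where
  conj_mem t ht g := by
    rw [Subgroup.mem_subgroupOf] at ht ⊢
    simpa [mul_assoc] using hs.2.2.2.1 i (↑g⁻¹) g⁻¹.2 t ht

theorem exists_zpow_inv_mul_zpow_mem (hs : IsPolycyclicSeries s) (i : Fin k) {u x : G}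
    (hu : u ∈ s i.castSucc) (huT : u ∉ s i.succ) (hx : x ∈ s i.castSucc) :
    ∃ n : ℤ, n ≠ 0 ∧ ∃ b : ℤ, (u ^ b)⁻¹ * x ^ n ∈ s i.succ := by
  have := hs.subgroupOf_normal i
  obtain ⟨c, hc, hgen⟩ := hs.2.2.2.2 i
  have : IsCyclic (s i.castSucc ⧸ (s i.succ).subgroupOf (s i.castSucc)) := by
    refine ⟨⟨(⟨c, hc⟩ : s i.castSucc), ?_⟩⟩
    intro q
    obtain ⟨⟨y, hy⟩, rfl⟩ := QuotientGroup.mk_surjective q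
    obtain ⟨m, hm⟩ := hgen y hy
    refine ⟨m, ?_⟩
    dsimp only
    rw [← QuotientGroup.mk_zpow, QuotientGroup.eq, Subgroup.mem_subgroupOf]
    simpa using hm
  exact Subgroup.exists_zpow_inv_mul_zpow_mem hu huT hx

end IsPolycyclicSeries

section Meeting

variable {G : Type*} [Group G] {k : ℕ}

open Classical in
noncomputable def infiniteFactorsMeeting (s : Fin (k + 1) → Subgroup G) (N : Subgroup G) :
    Finset (Fin k) :=
  {i | InfiniteFactor s i ∧ ∃ u ∈ N, u ∈ s i.castSucc ∧ u ∉ s i.succ}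

variable {s : Fin (k + 1) → Subgroup G}

theorem mem_infiniteFactorsMeeting {N : Subgroup G} {i : Fin k} :
    i ∈ infiniteFactorsMeeting s N ↔
      InfiniteFactor s i ∧ ∃ u ∈ N, u ∈ s i.castSucc ∧ u ∉ s i.succ := by
  simp [infiniteFactorsMeeting]

theorem infiniteFactorsMeeting_mono : Monotone (infiniteFactorsMeeting s) := by
  intro N M hNM i
  simp only [mem_infiniteFactorsMeeting]
  exact fun ⟨hi, u, huN, hu⟩ => ⟨hi, u, hNM huN, hu⟩

theorem card_infiniteFactorsMeeting_le (N : Subgroup G) :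
    (infiniteFactorsMeeting s N).card ≤ Nat.card {i : Fin k // InfiniteFactor s i} := by
  classical
  rw [Nat.card_eq_fintype_card, Fintype.card_subtype]
  exact Finset.card_le_card fun i hi => by
    simpa using (mem_infiniteFactorsMeeting.mp hi).1

namespace IsPolycyclicSeries

theorem exists_zpow_mem_succ (hs : IsPolycyclicSeries s) {N M : Subgroup G}
    (hMN : infiniteFactorsMeeting s M ⊆ infiniteFactorsMeeting s N) (i : Fin k) {x : G}
    (hxM : x ∈ M) (hx : x ∈ s i.castSucc) :
    ∃ n : ℤ, n ≠ 0 ∧ ∃ w ∈ N, w⁻¹ * x ^ n ∈ s i.succ := by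
  by_cases hN : ∃ u ∈ N, u ∈ s i.castSucc ∧ u ∉ s i.succ
  · obtain ⟨u, huN, hu, huT⟩ := hN
    obtain ⟨n, hn, b, hb⟩ := hs.exists_zpow_inv_mul_zpow_mem i hu huT hx
    exact ⟨n, hn, u ^ b, N.zpow_mem huN b, hb⟩
  by_cases hinf : InfiniteFactor s i
  · have hxT : x ∈ s i.succ := by
      by_contra hxT
      exact hN (mem_infiniteFactorsMeeting.mp (hMN (mem_infiniteFactorsMeeting.mpr
        ⟨hinf, x, hxM, hx, hxT⟩))).2
    exact ⟨1, one_ne_zero, 1, N.one_mem, by simpa using hxT⟩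
  · simp only [InfiniteFactor, not_exists, not_and, not_forall, not_not] at hinf
    obtain ⟨n, hn, hxn⟩ := hinf x hx
    exact ⟨n, hn, 1, N.one_mem, by simpa using hxn⟩

theorem exists_zpow_mem_of_infiniteFactorsMeeting_subset (hs : IsPolycyclicSeries s)
    {N M : Subgroup G} [N.Normal] (hNM : N ≤ M)
    (hMN : infiniteFactorsMeeting s M ⊆ infiniteFactorsMeeting s N) {x : G} (hx : x ∈ M) :
    ∃ n : ℤ, n ≠ 0 ∧ x ^ n ∈ N := by
  suffices h : ∀ i, ∀ x ∈ M, x ∈ s i → ∃ n : ℤ, n ≠ 0 ∧ x ^ n ∈ N from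
    h 0 x hx (hs.1 ▸ Subgroup.mem_top x)
  intro i
  induction i using Fin.reverseInduction with
  | last =>
    intro x _ hx
    rw [hs.2.1, Subgroup.mem_bot] at hx
    exact ⟨1, one_ne_zero, by simp [hx]⟩
  | cast i ih =>
    intro x hxM hx
    obtain ⟨n, hn, w, hwN, hw⟩ := hs.exists_zpow_mem_succ hMN i hxM hx
    obtain ⟨m, hm, hmN⟩ := ih _ (M.mul_mem (M.inv_mem (hNM hwN)) (M.zpow_mem hxM n)) hw
    exact ⟨n * m, mul_ne_zero hn hm, zpow_mul x n m ▸ zpow_mem_of_inv_mul_zpow_mem hwN hmN⟩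

theorem infiniteFactorsMeeting_ssubset (hs : IsPolycyclicSeries s) {N M : Subgroup G}
    [N.Normal] (hN : ∀ x : G, ∀ n : ℤ, n ≠ 0 → x ^ n ∈ N → x ∈ N) (hNM : N < M) :
    infiniteFactorsMeeting s N ⊂ infiniteFactorsMeeting s M := by
  refine Finset.ssubset_iff_subset_ne.mpr ⟨infiniteFactorsMeeting_mono hNM.le, fun h => ?_⟩
  refine hNM.not_ge fun x hx => ?_
  obtain ⟨n, hn, hxn⟩ := hs.exists_zpow_mem_of_infiniteFactorsMeeting_subset hNM.le h.ge hx
  exact hN x n hn hxn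

end IsPolycyclicSeries

end Meeting

theorem stmt7 {G : Type} [Group G] (hTF : Monoid.IsTorsionFree G)
    (k : ℕ) (s : Fin (k + 1) → Subgroup G) (hs : IsPolycyclicSeries s) :
    projDim G ≤ (Nat.card {i : Fin k // InfiniteFactor s i} : ℕ∞) := by
  refine iSup₂_le fun l ⟨N, hN, hmono, _, hdisc⟩ => ?_
  have hisolated (j : Fin (l + 1)) (x : G) (n : ℤ) (hn : n ≠ 0) (hx : x ^ n ∈ N j) : x ∈ N j :=
    have := hN j
    mem_of_zpow_mem_of_discriminates hTF (hdisc j).1 hn hx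
  have hchain : StrictMono fun j => (infiniteFactorsMeeting s (N j)).card := fun i j hij =>
    have := hN i
    Finset.card_lt_card (hs.infiniteFactorsMeeting_ssubset (hisolated i) (hmono hij))
  calc (l : ℕ∞) ≤ (infiniteFactorsMeeting s (N (Fin.last l))).card := by
        exact_mod_cast Fin.val_le_of_strictMono hchain (Fin.last l)
    _ ≤ Nat.card {i : Fin k // InfiniteFactor s i} := by
        exact_mod_cast card_infiniteFactorsMeeting_le _
end

section
/- Let G be a group, C an abelian normal subgroup of G, B = G/C, and let g ↦ ḡ denote the canonical epimorphism G → B. Then there exists a right ZB-module D and an injective group homomorphism λ from G into the group M(G) of 2×2 matrices of the form [[b, 0], [d, 1]] with b in B and d in D (that is, the semidirect product D ⋊ B with B acting on D by the module action), with gλ = [[ḡ, 0], [d(g), 1]], such that: (1) D is generated as a ZB-module by the elements d(g), g in G; (2) the map d(g) ↦ ḡ − 1 extends to an epimorphism of ZB-modules σ: D → (B−1)·ZB onto the fundamental (augmentation) ideal of ZB viewed as a ZB-module; (3) ker σ = d(C). -/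
/-!
STATEMENT 8 (Lemma, matrix splittings): Let `G` be a group, `C` an abelian normal
subgroup of `G`, `B = G/C`. Then there is a right `ℤB`-module `D` and an injective
homomorphism `λ : G → M(G) = [[B, 0], [D, 1]]`, `λ g = [[ḡ, 0], [d g, 1]]`, such that
(1) `D` is generated by the `d g`, `g ∈ G`; (2) `d g ↦ ḡ − 1` extends to a `ℤB`-module
epimorphism `σ : D → (B−1)·ℤB` onto the fundamental ideal; (3) `ker σ = d(C)`.
A homomorphism into `M(G)` is precisely a 1-cocycle `d`, and injectivity of `λ` is
injectivity of `g ↦ (ḡ, d g)`; right modules are left modules over the opposite ring.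
-/

/-- The elements of the abelian normal subgroup `C` are torsion-free under the natural
right `ℤ[G/C]`-module structure given by conjugation, expressed elementwise: a nonzero
group-ring element (representatives `h j` of pairwise distinct cosets mod `C`, integer
coefficients `m j`, not all zero) applied to `c ∈ C` is trivial only if `c` is. -/
def ConjTorsionFree {G : Type*} [Group G] (C : Subgroup G) : Prop :=
  ∀ c ∈ C, ∀ (k : ℕ) (h : Fin k → G) (m : Fin k → ℤ),
    (∀ j l : Fin k, j ≠ l → (h j)⁻¹ * h l ∉ C) → (∃ j, m j ≠ 0) →
    (List.ofFn fun j => ((h j)⁻¹ * c * h j) ^ m j).prod = 1 → c = 1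

/-- `(d, σ)` is a matrix splitting of `G` over `C` with `B = G/C`: the right
`ℤB`-module `D` (a left module over `(ℤB)ᵐᵒᵖ`) together with the injective homomorphism
`λ : g ↦ [[ḡ, 0], [d g, 1]]` into the matrix group `[[B, 0], [D, 1]]`. Injectivity of
`λ` is injectivity of `g ↦ (ḡ, d g)`, and `λ` being a homomorphism is the cocycle
identity `d (g h) = d g • h̄ + d h`. Moreover (1) `D` is generated by the `d g`;
(2) `σ` is a module epimorphism of `D` onto the fundamental (augmentation) ideal
`(B−1)·ℤB = {x | Σ coefficients of x = 0}` with `σ (d g) = ḡ − 1`; (3) `ker σ = d(C)`. -/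
def IsMatrixSplitting {G : Type*} [Group G] (C : Subgroup G) [C.Normal]
    {D : Type*} [AddCommGroup D] [Module (MonoidAlgebra ℤ (G ⧸ C))ᵐᵒᵖ D]
    (d : G → D)
    (σ : D →ₗ[(MonoidAlgebra ℤ (G ⧸ C))ᵐᵒᵖ] MonoidAlgebra ℤ (G ⧸ C)) : Prop :=
  Function.Injective (fun g : G => ((g : G ⧸ C), d g)) ∧
  (∀ g h : G, d (g * h) =
    MulOpposite.op (MonoidAlgebra.of ℤ (G ⧸ C) ((h : G ⧸ C))) • d g + d h) ∧
  Submodule.span (MonoidAlgebra ℤ (G ⧸ C))ᵐᵒᵖ (Set.range d) = ⊤ ∧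
  (∀ g : G, σ (d g) = MonoidAlgebra.of ℤ (G ⧸ C) ((g : G ⧸ C)) - 1) ∧
  Set.range σ = {x : MonoidAlgebra ℤ (G ⧸ C) | (x.coeff.sum fun _ n => n) = 0} ∧
  (∀ x : D, σ x = 0 ↔ x ∈ d '' (C : Set G))

/-- A bundled matrix splitting of `G` over `C`. -/
structure MatrixSplitting (G : Type*) [Group G] (C : Subgroup G) [C.Normal] where
  D : Type
  [instAdd : AddCommGroup D]
  [instMod : Module (MonoidAlgebra ℤ (G ⧸ C))ᵐᵒᵖ D]
  d : G → D
  σ : D →ₗ[(MonoidAlgebra ℤ (G ⧸ C))ᵐᵒᵖ] MonoidAlgebra ℤ (G ⧸ C)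
  isSplitting : IsMatrixSplitting C d σ

/-- `R` is a (two-sided) Ore domain: a domain satisfying the right and left Ore
conditions. -/
def IsOreDomain (R : Type*) [Ring R] : Prop :=
  (∀ a b : R, a * b = 0 → a = 0 ∨ b = 0) ∧
  (∀ a b : R, a ≠ 0 → b ≠ 0 → ∃ x y : R, a * x = b * y ∧ a * x ≠ 0) ∧
  (∀ a b : R, a ≠ 0 → b ≠ 0 → ∃ x y : R, x * a = y * b ∧ x * a ≠ 0)

open MonoidAlgebra MulOpposite

/-! Write `B = G/C`. The crossed homomorphism `g ↦ ḡ - 1` onto the augmentation ideal has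
kernel `C`; pair it with a crossed homomorphism `δ` into a right `ℤB`-module that is injective
on `C`. Since `C` is abelian, the Krasner–Kaloujnine cocycle into the coinduced module
`Hom_ℤ(ℤB, C)` is one. Then `g ↦ (δ g, ḡ - 1)` is injective together with `ḡ`, `D` is the
submodule it generates and `σ` the second projection. Every `(m, x) ∈ D` satisfies
`m ≡ Φ x mod δ(C)`, where `Φ` extends `b ↦ δ(b.out)` additively: `B` preserves this
congruence because the defect `δ(a.out) · b + δ(b.out) - δ((ab).out)` is the value of `δ` at
the factor set `(ab).out⁻¹ a.out b.out ∈ C`. Hence `σ (m, x) = 0` forces `m ∈ δ(C)`. -/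

namespace MonoidAlgebra

variable {B : Type*} [Monoid B]

noncomputable def augmentation : MonoidAlgebra ℤ B →+* ℤ := (lift ℤ ℤ B 1).toRingHom

lemma augmentation_apply (x : MonoidAlgebra ℤ B) :
    augmentation x = x.coeff.sum fun _ n => n := by
  simp [augmentation, lift_apply]

lemma augmentation_of_sub_one (b : B) : augmentation (of ℤ B b - 1) = 0 := by
  simp [augmentation]

lemma mem_closure_of_augmentation_eq_zero {x : MonoidAlgebra ℤ B} (hx : augmentation x = 0) :
    x ∈ AddSubgroup.closure (Set.range fun b => of ℤ B b - 1) := by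
  suffices h : ∀ y : MonoidAlgebra ℤ B, y - augmentation y • (1 : MonoidAlgebra ℤ B) ∈
      AddSubgroup.closure (Set.range fun b => of ℤ B b - 1) by
    simpa [hx] using h x
  intro y
  induction y using induction_linear with
  | zero => simp
  | add x y hx hy =>
    rw [map_add, add_smul, add_sub_add_comm]
    exact add_mem hx hy
  | single b n =>
    have : single b n - augmentation (single b n) • (1 : MonoidAlgebra ℤ B) =
        n • (of ℤ B b - 1) := by
      simp [augmentation, smul_sub, smul_single]
    rw [this]
    exact zsmul_mem (AddSubgroup.subset_closure (Set.mem_range_self b)) n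

lemma smul_mem_of_forall_op_of_smul_mem {N : Type*} [AddCommGroup N]
    [Module (MonoidAlgebra ℤ B)ᵐᵒᵖ N] {H : AddSubgroup N}
    (hH : ∀ b, ∀ p ∈ H, op (of ℤ B b) • p ∈ H) (r : (MonoidAlgebra ℤ B)ᵐᵒᵖ)
    {p : N} (hp : p ∈ H) : r • p ∈ H := by
  obtain ⟨x, rfl⟩ := MulOpposite.op_surjective r
  induction x using induction_on with
  | of b => exact hH b p hp
  | add x y hx hy => rw [op_add, add_smul]; exact add_mem hx hy
  | smul n x hx => rw [op_smul, smul_assoc]; exact zsmul_mem hx n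

end MonoidAlgebra

def IsCrossedHom {G : Type*} [Group G] (C : Subgroup G) [C.Normal] {M : Type*} [AddCommGroup M]
    [Module (MonoidAlgebra ℤ (G ⧸ C))ᵐᵒᵖ M] (δ : G → M) : Prop :=
  ∀ g h : G, δ (g * h) = op (of ℤ (G ⧸ C) (h : G ⧸ C)) • δ g + δ h

lemma isCrossedHom_of_sub_one {G : Type*} [Group G] (C : Subgroup G) [C.Normal] :
    IsCrossedHom C fun g : G => of ℤ (G ⧸ C) (g : G ⧸ C) - 1 := by
  intro g h
  simp only [op_smul_eq_mul, QuotientGroup.mk_mul, map_mul]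
  noncomm_ring

namespace IsCrossedHom

variable {G : Type*} [Group G] {C : Subgroup G} [C.Normal] {M : Type*} [AddCommGroup M]
  [Module (MonoidAlgebra ℤ (G ⧸ C))ᵐᵒᵖ M] {δ : G → M}

lemma prodMk {M' : Type*} [AddCommGroup M'] [Module (MonoidAlgebra ℤ (G ⧸ C))ᵐᵒᵖ M']
    {δ' : G → M'} (hδ : IsCrossedHom C δ) (hδ' : IsCrossedHom C δ') :
    IsCrossedHom C fun g => (δ g, δ' g) := fun g h =>
  Prod.ext (hδ g h) (hδ' g h)

lemma map_mul_of_mem (hδ : IsCrossedHom C δ) (g : G) {c : G} (hc : c ∈ C) :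
    δ (g * c) = δ g + δ c := by
  rw [hδ, (QuotientGroup.eq_one_iff c).mpr hc, map_one, op_one, one_smul]

lemma op_of_smul_eq_conj (hδ : IsCrossedHom C δ) {c : G} (hc : c ∈ C) (g : G) :
    op (of ℤ (G ⧸ C) (g : G ⧸ C)) • δ c = δ (g⁻¹ * c * g) := by
  have h := hδ c g
  rw [show c * g = g * (g⁻¹ * c * g) by group,
    hδ.map_mul_of_mem g (Subgroup.Normal.conj_mem' ‹_› c hc g)] at h
  exact add_right_cancel (h.symm.trans (add_comm _ _))

lemma injective (hδ : IsCrossedHom C δ) (hC : ∀ c ∈ C, δ c = 0 → c = 1) :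
    Function.Injective fun g : G => ((g : G ⧸ C), δ g) := by
  intro g h hgh
  obtain ⟨hq, hδgh⟩ := Prod.mk.inj hgh
  have hc : h⁻¹ * g ∈ C := QuotientGroup.eq.mp hq.symm
  have h0 : δ (h⁻¹ * g) = 0 := by
    have := hδ.map_mul_of_mem h hc
    rwa [mul_inv_cancel_left, ← hδgh, left_eq_add] at this
  exact (inv_mul_eq_one.mp (hC _ hc h0)).symm

def restrict (hδ : IsCrossedHom C δ) : Additive C →+ M :=
  AddMonoidHom.mk' (fun c => δ c.toMul) fun _ b => hδ.map_mul_of_mem _ b.toMul.2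

lemma apply_mem_range_restrict (hδ : IsCrossedHom C δ) {c : G} (hc : c ∈ C) :
    δ c ∈ hδ.restrict.range :=
  ⟨.ofMul ⟨c, hc⟩, rfl⟩

lemma op_of_smul_mem_range_restrict (hδ : IsCrossedHom C δ) (b : G ⧸ C) {m : M}
    (hm : m ∈ hδ.restrict.range) : op (of ℤ (G ⧸ C) b) • m ∈ hδ.restrict.range := by
  obtain ⟨c, rfl⟩ := hm
  have := hδ.op_of_smul_eq_conj c.toMul.2 b.out
  rw [QuotientGroup.out_eq'] at this
  rw [show hδ.restrict c = δ c.toMul from rfl, this]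
  exact hδ.apply_mem_range_restrict (Subgroup.Normal.conj_mem' ‹_› _ c.toMul.2 _)

end IsCrossedHom

section SplittingOfCrossedHom

variable {G : Type} [Group G] {C : Subgroup G} [C.Normal] {M : Type} [AddCommGroup M] {δ : G → M}

variable (C) in
lemma out_one_mem : (1 : G ⧸ C).out ∈ C := by
  rw [← QuotientGroup.eq_one_iff, QuotientGroup.out_eq']

variable (δ) in
noncomputable def transversalSum : MonoidAlgebra ℤ (G ⧸ C) →+ M :=
  ((MonoidAlgebra.basis (G ⧸ C) ℤ).constr ℤ fun b => δ b.out).toAddMonoidHom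

lemma transversalSum_of (b : G ⧸ C) : transversalSum δ (of ℤ (G ⧸ C) b) = δ b.out :=
  (MonoidAlgebra.basis (G ⧸ C) ℤ).constr_basis ℤ _ b

lemma transversalSum_one :
    transversalSum δ (1 : MonoidAlgebra ℤ (G ⧸ C)) = δ (1 : G ⧸ C).out := by
  rw [← map_one (of ℤ (G ⧸ C)), transversalSum_of]

variable [Module (MonoidAlgebra ℤ (G ⧸ C))ᵐᵒᵖ M]

lemma IsCrossedHom.op_of_smul_transversalSum_sub_mem (hδ : IsCrossedHom C δ) (b : G ⧸ C)
    {x : MonoidAlgebra ℤ (G ⧸ C)} (hx : augmentation x = 0) :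
    op (of ℤ (G ⧸ C) b) • transversalSum δ x - transversalSum δ (x * of ℤ (G ⧸ C) b) ∈
      hδ.restrict.range := by
  let f : MonoidAlgebra ℤ (G ⧸ C) →+ M :=
    (DistribSMul.toAddMonoidHom M (op (of ℤ (G ⧸ C) b))).comp (transversalSum δ) -
      (transversalSum δ).comp (AddMonoidHom.mulRight (of ℤ (G ⧸ C) b))
  suffices h : AddSubgroup.closure (Set.range fun a => of ℤ (G ⧸ C) a - 1) ≤
      hδ.restrict.range.comap f from h (mem_closure_of_augmentation_eq_zero hx)
  rw [AddSubgroup.closure_le]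
  rintro _ ⟨a, rfl⟩
  have hb : ((b.out : G) : G ⧸ C) = b := QuotientGroup.out_eq' b
  have hu : (a * b).out⁻¹ * (a.out * b.out) ∈ C := by
    rw [← QuotientGroup.eq_one_iff]; simp
  have hab : op (of ℤ (G ⧸ C) b) • δ a.out =
      δ (a * b).out + δ ((a * b).out⁻¹ * (a.out * b.out)) - δ b.out := by
    rw [← hδ.map_mul_of_mem _ hu, mul_inv_cancel_left, hδ, hb, add_sub_cancel_right]
  have hone : op (of ℤ (G ⧸ C) b) • δ (1 : G ⧸ C).out =
      δ (b.out⁻¹ * (1 : G ⧸ C).out * b.out) := by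
    simpa only [hb] using hδ.op_of_smul_eq_conj (out_one_mem C) b.out
  simp only [SetLike.mem_coe, AddSubgroup.mem_comap, f, AddMonoidHom.sub_apply,
    AddMonoidHom.comp_apply, DistribSMul.toAddMonoidHom_apply, AddMonoidHom.mulRight_apply,
    one_mul, ← map_mul, map_sub, transversalSum_of, transversalSum_one, hab, hone]
  have hconj := Subgroup.Normal.conj_mem' ‹_› _ (out_one_mem C) b.out
  convert sub_mem (hδ.apply_mem_range_restrict hu) (hδ.apply_mem_range_restrict hconj) using 1
  abel

noncomputable def IsCrossedHom.compatibleSubmodule (hδ : IsCrossedHom C δ) :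
    Submodule (MonoidAlgebra ℤ (G ⧸ C))ᵐᵒᵖ (M × MonoidAlgebra ℤ (G ⧸ C)) :=
  let H : AddSubgroup (M × MonoidAlgebra ℤ (G ⧸ C)) :=
    { carrier := {p | augmentation p.2 = 0 ∧ p.1 - transversalSum δ p.2 ∈ hδ.restrict.range}
      add_mem' := by
        rintro p q ⟨hp, hp'⟩ ⟨hq, hq'⟩
        refine ⟨by simp [hp, hq], ?_⟩
        convert add_mem hp' hq' using 1
        simp only [Prod.fst_add, Prod.snd_add, map_add]
        abel
      zero_mem' := ⟨map_zero _, by simp⟩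
      neg_mem' := by
        rintro p ⟨hp, hp'⟩
        refine ⟨by simp [hp], ?_⟩
        convert neg_mem hp' using 1
        simp only [Prod.fst_neg, Prod.snd_neg, map_neg]
        abel }
  { H with
    smul_mem' := fun r p hp => smul_mem_of_forall_op_of_smul_mem (H := H) (fun b p hp => by
      obtain ⟨hp, hp'⟩ := hp
      refine ⟨by simp [hp], ?_⟩
      convert add_mem (hδ.op_of_smul_mem_range_restrict b hp')
        (hδ.op_of_smul_transversalSum_sub_mem b hp) using 1
      simp only [Prod.smul_fst, Prod.smul_snd, op_smul_eq_mul, smul_sub]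
      abel) r hp }

variable (C δ) in
noncomputable def splittingModule :
    Submodule (MonoidAlgebra ℤ (G ⧸ C))ᵐᵒᵖ (M × MonoidAlgebra ℤ (G ⧸ C)) :=
  Submodule.span _ (Set.range fun g => (δ g, of ℤ (G ⧸ C) (g : G ⧸ C) - 1))

lemma mk_apply_mem_splittingModule (g : G) :
    (δ g, of ℤ (G ⧸ C) (g : G ⧸ C) - 1) ∈ splittingModule C δ :=
  Submodule.subset_span (Set.mem_range_self g)

lemma IsCrossedHom.splittingModule_le_compatibleSubmodule (hδ : IsCrossedHom C δ) :
    splittingModule C δ ≤ hδ.compatibleSubmodule := by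
  refine Submodule.span_le.mpr ?_
  rintro _ ⟨g, rfl⟩
  refine ⟨augmentation_of_sub_one _, ?_⟩
  have hg : (g : G ⧸ C).out⁻¹ * g ∈ C := by
    rw [← QuotientGroup.eq_one_iff]; simp
  have hδg := hδ.map_mul_of_mem (g : G ⧸ C).out hg
  rw [mul_inv_cancel_left] at hδg
  simp only [map_sub, transversalSum_of, transversalSum_one]
  convert add_mem (hδ.apply_mem_range_restrict hg)
    (hδ.apply_mem_range_restrict (out_one_mem C)) using 1
  rw [hδg]
  abel

lemma mk_transversalSum_mem_splittingModule {x : MonoidAlgebra ℤ (G ⧸ C)}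
    (hx : augmentation x = 0) : (transversalSum δ x, x) ∈ splittingModule C δ := by
  let f := (transversalSum δ).prod (AddMonoidHom.id (MonoidAlgebra ℤ (G ⧸ C)))
  suffices h : AddSubgroup.closure (Set.range fun a => of ℤ (G ⧸ C) a - 1) ≤
      (splittingModule C δ).toAddSubgroup.comap f from h (mem_closure_of_augmentation_eq_zero hx)
  rw [AddSubgroup.closure_le]
  rintro _ ⟨a, rfl⟩
  rw [SetLike.mem_coe, AddSubgroup.mem_comap, Submodule.mem_toAddSubgroup]
  convert sub_mem (mk_apply_mem_splittingModule (C := C) (δ := δ) a.out)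
    (mk_apply_mem_splittingModule (C := C) (δ := δ) (1 : G ⧸ C).out) using 1
  simp only [f, AddMonoidHom.prod_apply, AddMonoidHom.id_apply, map_sub, transversalSum_of,
    transversalSum_one, QuotientGroup.out_eq', Prod.mk_sub_mk, map_one, sub_self, sub_zero]

noncomputable def IsCrossedHom.matrixSplitting (hδ : IsCrossedHom C δ)
    (hC : ∀ c ∈ C, δ c = 0 → c = 1) : MatrixSplitting G C where
  D := splittingModule C δ
  d g := ⟨_, mk_apply_mem_splittingModule g⟩
  σ := LinearMap.snd _ _ _ ∘ₗ (splittingModule C δ).subtype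
  isSplitting := by
    refine ⟨?_, fun g h => Subtype.ext (hδ.prodMk (isCrossedHom_of_sub_one C) g h), ?_,
      fun g => rfl, ?_, ?_⟩
    · intro g h hgh
      simp only [Prod.mk.injEq, Subtype.mk.injEq] at hgh
      exact hδ.injective hC (Prod.ext hgh.1 hgh.2.1)
    · refine eq_top_iff.mpr ((Submodule.span_span_coe_preimage
        (s := Set.range fun g => (δ g, of ℤ (G ⧸ C) (g : G ⧸ C) - 1))).ge.trans
          (Submodule.span_mono ?_))
      rintro ⟨p, hp⟩ ⟨g, hg⟩
      exact ⟨g, Subtype.ext hg⟩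
    · ext x
      constructor
      · rintro ⟨p, rfl⟩
        rw [Set.mem_ofPred_eq, ← augmentation_apply]
        exact (hδ.splittingModule_le_compatibleSubmodule p.2).1
      · intro hx
        rw [Set.mem_ofPred_eq, ← augmentation_apply] at hx
        exact ⟨⟨_, mk_transversalSum_mem_splittingModule hx⟩, rfl⟩
    · rintro ⟨⟨m, x⟩, hp⟩
      constructor
      · rintro rfl
        obtain ⟨c, hc, rfl⟩ := by simpa using (hδ.splittingModule_le_compatibleSubmodule hp).2
        refine ⟨c, hc, Subtype.ext (Prod.ext rfl ?_)⟩
        simp [(QuotientGroup.eq_one_iff c).mpr hc, ← MonoidAlgebra.one_def]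
      · rintro ⟨c, hc, hcp⟩
        rw [← hcp]
        simp [(QuotientGroup.eq_one_iff c).mpr hc, ← MonoidAlgebra.one_def]

end SplittingOfCrossedHom

def Coinduced (B A : Type*) [Monoid B] [AddCommGroup A] := MonoidAlgebra ℤ B →ₗ[ℤ] A

namespace Coinduced

variable {B A : Type*} [Monoid B] [AddCommGroup A]

noncomputable instance : AddCommGroup (Coinduced B A) :=
  inferInstanceAs (AddCommGroup (MonoidAlgebra ℤ B →ₗ[ℤ] A))

noncomputable instance : Module (MonoidAlgebra ℤ B)ᵐᵒᵖ (Coinduced B A) :=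
  inferInstanceAs (Module (MonoidAlgebra ℤ B)ᵈᵐᵃ (MonoidAlgebra ℤ B →ₗ[ℤ] A))

instance : FunLike (Coinduced B A) (MonoidAlgebra ℤ B) A :=
  inferInstanceAs (FunLike (MonoidAlgebra ℤ B →ₗ[ℤ] A) _ _)

lemma op_smul_apply (r : MonoidAlgebra ℤ B) (φ : Coinduced B A) (x : MonoidAlgebra ℤ B) :
    (op r • φ) x = φ (r * x) := rfl

lemma add_apply (φ ψ : Coinduced B A) (x : MonoidAlgebra ℤ B) :
    (φ + ψ) x = φ x + ψ x := rfl

noncomputable def ofFun (f : B → A) : Coinduced B A := (MonoidAlgebra.basis B ℤ).constr ℤ f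

lemma ofFun_of (f : B → A) (b : B) : ofFun f (of ℤ B b) = f b :=
  (MonoidAlgebra.basis B ℤ).constr_basis ℤ f b

lemma ext_of {φ ψ : Coinduced B A} (h : ∀ b, φ (of ℤ B b) = ψ (of ℤ B b)) : φ = ψ :=
  (MonoidAlgebra.basis B ℤ).ext h

end Coinduced

section Kaloujnine

open scoped IsMulCommutative

variable {G : Type*} [Group G] (C : Subgroup G) [C.Normal]

lemma out_inv_mul_mul_out_mem (g : G) (b : G ⧸ C) :
    ((g : G ⧸ C) * b).out⁻¹ * g * b.out ∈ C := by
  rw [← QuotientGroup.eq_one_iff]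
  simp

variable [IsMulCommutative C]

noncomputable def kaloujnineCocycle (g : G) : Coinduced (G ⧸ C) (Additive C) :=
  Coinduced.ofFun fun b => .ofMul ⟨_, out_inv_mul_mul_out_mem C g b⟩

lemma isCrossedHom_kaloujnineCocycle : IsCrossedHom C (kaloujnineCocycle C) := fun g h => by
  refine Coinduced.ext_of fun b => ?_
  simp only [Coinduced.add_apply, Coinduced.op_smul_apply, ← map_mul, kaloujnineCocycle,
    Coinduced.ofFun_of, ← ofMul_mul]
  congr 1
  ext
  simp only [Subgroup.coe_mul, QuotientGroup.mk_mul, mul_assoc]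
  group

lemma eq_one_of_kaloujnineCocycle_eq_zero {c : G} (hc : c ∈ C)
    (h : kaloujnineCocycle C c = 0) : c = 1 := by
  have h1 : kaloujnineCocycle C c (of ℤ (G ⧸ C) 1) = 0 := by rw [h]; rfl
  rw [kaloujnineCocycle, Coinduced.ofFun_of, ← ofMul_one, Additive.ofMul.injective.eq_iff,
    Subtype.ext_iff] at h1
  simp only [OneMemClass.coe_one, (QuotientGroup.eq_one_iff c).mpr hc, mul_one] at h1
  rwa [mul_assoc, inv_mul_eq_one, right_eq_mul] at h1

end Kaloujnine

theorem stmt8 {G : Type} [Group G] (C : Subgroup G) [C.Normal]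
    (habel : ∀ x ∈ C, ∀ y ∈ C, x * y = y * x) :
    Nonempty (MatrixSplitting G C) := by
  have : IsMulCommutative C := ⟨⟨fun a b => Subtype.ext (habel a a.2 b b.2)⟩⟩
  exact ⟨(isCrossedHom_kaloujnineCocycle C).matrixSplitting fun _ =>
    eq_one_of_kaloujnineCocycle_eq_zero C⟩
end

section
/- Let G be a group generated by finitely many elements g_1, ..., g_m, let C be an abelian normal subgroup of G with B = G/C nontrivial, and suppose the group ring ZB is an Ore domain and C, viewed as a ZB-module, has no torsion. Then G embeds into a wreath product A_n ≀ B, where A_n is a free abelian group of rank n and n is the rank of the module D of a splitting of G over C. -/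
universe u

def RightOreCondition (R : Type*) [Ring R] : Prop :=
  ∀ a b : R, a ≠ 0 → b ≠ 0 → ∃ x y : R, a * x = b * y ∧ a * x ≠ 0

namespace IsOreDomain

variable {R : Type*} [Ring R]

theorem op (h : IsOreDomain R) : IsOreDomain Rᵐᵒᵖ := by
  obtain ⟨hdom, hright, hleft⟩ := h
  refine ⟨fun a b hab => ?_, fun a b ha hb => ?_, fun a b ha hb => ?_⟩
  · have := hdom b.unop a.unop (by rw [← MulOpposite.unop_mul, hab, MulOpposite.unop_zero])
    simpa [or_comm] using this
  · obtain ⟨x, y, hxy, hne⟩ := hleft a.unop b.unop (by simpa) (by simpa)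
    exact ⟨.op x, .op y, MulOpposite.unop_injective hxy,
      fun h => hne (by simpa using congrArg MulOpposite.unop h)⟩
  · obtain ⟨x, y, hxy, hne⟩ := hright a.unop b.unop (by simpa) (by simpa)
    exact ⟨.op x, .op y, MulOpposite.unop_injective hxy,
      fun h => hne (by simpa using congrArg MulOpposite.unop h)⟩

theorem isDomain [Nontrivial R] (h : IsOreDomain R) : IsDomain R :=
  haveI : NoZeroDivisors R := ⟨fun hab => h.1 _ _ hab⟩
  NoZeroDivisors.to_isDomain R

open nonZeroDivisors in
theorem nonempty_oreSet [IsDomain R] (h : IsOreDomain R) : Nonempty (OreLocalization.OreSet R⁰) :=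
  OreLocalization.nonempty_oreSet_iff_of_noZeroDivisors.mpr fun r s => by
    by_cases hr : r = 0
    · exact ⟨0, 1, by simp [hr]⟩
    obtain ⟨x, y, hxy, hne⟩ := h.2.2 r s hr (nonZeroDivisors.ne_zero s.2)
    exact ⟨y, ⟨x, mem_nonZeroDivisors_of_ne_zero (left_ne_zero_of_mul hne)⟩, hxy⟩

end IsOreDomain

namespace OreLocalization

open nonZeroDivisors

section Module

variable {R : Type*} [Ring R] {S : Submonoid R} [OreSet S]
  {X : Type*} [AddCommGroup X] [Module R X]

variable (S X) in
def mkLinearMap : X →ₗ[R] X[S⁻¹] where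
  toFun x := x /ₒ 1
  map_add' _ _ := add_oreDiv.symm
  map_smul' r x := (smul_oreDiv_one r x).symm

@[simp]
lemma mkLinearMap_apply (x : X) : mkLinearMap S X x = x /ₒ 1 := rfl

lemma oreDiv_one_eq_zero_iff {x : X} : x /ₒ (1 : S) = 0 ↔ ∃ u : S, (u : R) • x = 0 := by
  rw [← zero_oreDiv (1 : S), oreDiv_eq_iff]
  constructor
  · rintro ⟨u, v, h, huv⟩
    simp only [smul_zero, Submonoid.coe_one, mul_one] at h huv
    exact ⟨u, huv ▸ h.symm⟩
  · rintro ⟨u, hu⟩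
    exact ⟨u, u, by simp [hu], rfl⟩

lemma smul_oreDiv_self (x : X) (s : S) : (s : R) • (x /ₒ s) = x /ₒ 1 := by
  rw [← oreDiv_one_smul, OreLocalization.smul_cancel]

lemma eq_zero_of_smul_eq_zero {u : S} {z : X[S⁻¹]} (h : (u : R) • z = 0) : z = 0 := by
  rw [← OreLocalization.one_smul z, ← OreLocalization.mul_inv (1 : S) u, mul_smul,
    oreDiv_one_smul, h, smul_zero]

lemma exists_smul_eq_oreDiv_one {ι : Type*} (s : Finset ι) (x : ι → X[S⁻¹]) :
    ∃ u : S, ∀ i ∈ s, ∃ y : X, (u : R) • x i = y /ₒ 1 := by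
  classical
  induction s using Finset.induction_on with
  | empty => exact ⟨1, by simp⟩
  | insert i s _ ih =>
    obtain ⟨u, hu⟩ := ih
    obtain ⟨y, t, hyt⟩ : ∃ (y : X) (t : S), x i = y /ₒ t :=
      OreLocalization.ind (fun y t => ⟨y, t, rfl⟩) (x i)
    refine ⟨oreDenom (t : R) u * t, fun j hj => ?_⟩
    rcases Finset.mem_insert.mp hj with rfl | hj
    · exact ⟨(oreDenom (t : R) u : R) • y, by
        rw [hyt, Submonoid.coe_mul, mul_smul, smul_oreDiv_self, smul_oreDiv_one]⟩
    · obtain ⟨z, hz⟩ := hu j hj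
      exact ⟨oreNum (t : R) u • z, by
        rw [Submonoid.coe_mul, ore_eq, mul_smul, hz, smul_oreDiv_one]⟩

instance [Module.Finite R X] : Module.Finite R[S⁻¹] X[S⁻¹] := by
  classical
  obtain ⟨n, w, hw⟩ := Module.Finite.exists_fin (R := R) (M := X)
  refine ⟨⟨Finset.univ.image (mkLinearMap S X ∘ w), Submodule.eq_top_iff'.mpr fun v => ?_⟩⟩
  obtain ⟨x, s, rfl⟩ : ∃ (x : X) (s : S), v = x /ₒ s :=
    OreLocalization.ind (fun x s => ⟨x, s, rfl⟩) v
  have hx : mkLinearMap S X x ∈ Submodule.span R (Set.range (mkLinearMap S X ∘ w)) := by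
    rw [Set.range_comp, ← Submodule.map_span, hw]
    exact Submodule.mem_map_of_mem trivial
  rw [Finset.coe_image, Finset.coe_univ, Set.image_univ, ← one_mul s,
    ← OreLocalization.one_div_smul]
  exact Submodule.smul_mem _ _ (Submodule.span_le_restrictScalars R R[S⁻¹] _ hx)

end Module

section NonZeroDivisors

variable {R : Type*} [Ring R] [OreSet R⁰] {X : Type*} [AddCommGroup X] [Module R X]

lemma numeratorRingHom_injective : Function.Injective (numeratorRingHom : R →+* R[R⁰⁻¹]) :=
  numeratorHom_inj fun _ h => h.1

lemma mkLinearMap_injective [Module.IsTorsionFree R X] :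
    Function.Injective (mkLinearMap R⁰ X) := by
  refine (injective_iff_map_eq_zero _).mpr fun x hx => ?_
  obtain ⟨u, hu⟩ := oreDiv_one_eq_zero_iff.mp hx
  exact (isRegular_iff_mem_nonZeroDivisors.mpr u.2).smul_eq_zero_iff_right.mp hu

theorem _root_.LinearIndependent.oreLocalization {ι : Type*} {v : ι → X}
    (hv : LinearIndependent R v) : LinearIndependent R[R⁰⁻¹] (mkLinearMap R⁰ X ∘ v) := by
  classical
  rw [linearIndependent_iff'] at hv ⊢
  intro s g hg i hi
  obtain ⟨u, hu⟩ := exists_smul_eq_oreDiv_one s g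
  choose! a ha using hu
  have hsum : mkLinearMap R⁰ X (∑ j ∈ s, a j • v j) = 0 := by
    rw [map_sum, ← smul_zero (u : R), ← hg, Finset.smul_sum]
    refine Finset.sum_congr rfl fun j hj => ?_
    rw [Function.comp_apply, ← smul_assoc, ha j hj, oreDiv_one_smul (a j), LinearMap.map_smul]
  obtain ⟨w, hw⟩ := oreDiv_one_eq_zero_iff.mp hsum
  simp_rw [Finset.smul_sum, smul_smul] at hw
  have hai : a i = 0 :=
    (mem_nonZeroDivisors_iff.mp w.2).1 _ (hv s (fun j => (w : R) * a j) hw i hi)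
  exact eq_zero_of_smul_eq_zero (u := u) (by rw [ha i hi, hai, zero_oreDiv])

theorem linearIndependent_of_oreDiv {ι : Type*} {v : ι → X[R⁰⁻¹]}
    (hv : LinearIndependent R[R⁰⁻¹] v) {y : ι → X} {s : ι → R⁰} (hys : ∀ i, v i = y i /ₒ s i) :
    LinearIndependent R y := by
  classical
  rw [linearIndependent_iff'] at hv ⊢
  intro t g hg i hi
  have hsum : ∑ j ∈ t, ((g j * s j : R) /ₒ (1 : R⁰)) • v j = 0 := by
    have hj : ∀ j, ((g j * s j : R) /ₒ (1 : R⁰)) • v j = mkLinearMap R⁰ X (g j • y j) :=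
      fun j => by rw [oreDiv_one_smul (g j * s j), mul_smul, hys j, smul_oreDiv_self,
        mkLinearMap_apply, smul_oreDiv_one]
    simp only [hj, ← map_sum, hg, map_zero]
  obtain ⟨u, hu⟩ := oreDiv_one_eq_zero_iff.mp (hv t _ hsum i hi)
  rw [smul_eq_mul] at hu
  exact (mem_nonZeroDivisors_iff.mp (s i).2).2 _ ((mem_nonZeroDivisors_iff.mp u.2).1 _ hu)

end NonZeroDivisors

theorem rank_eq {R : Type u} [Ring R] [Nontrivial R] [OreSet R⁰]
    {X : Type u} [AddCommGroup X] [Module R X] :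
    Module.rank R[R⁰⁻¹] X[R⁰⁻¹] = Module.rank R X := by
  apply le_antisymm
  · rw [Module.rank_def R[R⁰⁻¹]]
    refine ciSup_le' fun ⟨b, hb⟩ => ?_
    choose y s hys using fun v : b => OreLocalization.ind (β := fun v => ∃ y s, v = y /ₒ s)
      (fun y s => ⟨y, s, rfl⟩) (v : X[R⁰⁻¹])
    exact (linearIndependent_of_oreDiv hb.linearIndependent hys).cardinal_le_rank
  · rw [Module.rank_def R X]
    exact ciSup_le' fun ⟨b, hb⟩ => hb.linearIndependent.oreLocalization.cardinal_le_rank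

section RightOre

variable {A : Type*} [Ring A] [OreSet A⁰] (hA : RightOreCondition A)
include hA

lemma exists_mul_numeratorRingHom_mem_range [Nontrivial A] (q : A[A⁰⁻¹]) :
    ∃ t : A, t ≠ 0 ∧ q * numeratorRingHom t ∈ (numeratorRingHom : A →+* A[A⁰⁻¹]).range := by
  obtain ⟨a, s, rfl⟩ : ∃ (a : A) (s : A⁰), q = a /ₒ s :=
    OreLocalization.ind (fun a s => ⟨a, s, rfl⟩) q
  by_cases ha : a = 0
  · exact ⟨1, one_ne_zero, 0, by simp [ha]⟩
  obtain ⟨x, y, hxy, hne⟩ := hA a s ha (nonZeroDivisors.ne_zero s.2)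
  refine ⟨x, right_ne_zero_of_mul hne, y, ?_⟩
  rw [numeratorRingHom_apply, numeratorRingHom_apply, mul_div_one, hxy,
    OreLocalization.expand' y 1 s, mul_one, Submonoid.smul_def, smul_eq_mul]

lemma exists_forall_mul_numeratorRingHom_mem_range [Nontrivial A] {ι : Type*} (s : Finset ι)
    (q : ι → A[A⁰⁻¹]) : ∃ N : A, N ≠ 0 ∧
      ∀ i ∈ s, q i * numeratorRingHom N ∈ (numeratorRingHom : A →+* A[A⁰⁻¹]).range := by
  classical
  induction s using Finset.induction_on with
  | empty => exact ⟨1, one_ne_zero, by simp⟩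
  | insert i s _ ih =>
    obtain ⟨N, hN, hNs⟩ := ih
    obtain ⟨t, ht, hti⟩ := exists_mul_numeratorRingHom_mem_range hA (q i)
    obtain ⟨x, y, hxy, hne⟩ := hA t N ht hN
    refine ⟨t * x, hne, fun j hj => ?_⟩
    rcases Finset.mem_insert.mp hj with rfl | hj
    · rw [map_mul, ← mul_assoc]
      exact Subring.mul_mem _ hti ⟨x, rfl⟩
    · rw [hxy, map_mul, ← mul_assoc]
      exact Subring.mul_mem _ (hNs j hj) ⟨y, rfl⟩

-- Right multiplication by a common right denominator `N` is `A`-linear and clears denominators.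
theorem exists_injective_linearMap_pi [IsDomain A] {M : Type*} [AddCommGroup M] [Module A M]
    [Module.Finite A M] {ι : Type*} [Finite ι] (φ : M →ₗ[A] ι → A[A⁰⁻¹])
    (hφ : Function.Injective φ) : ∃ f : M →ₗ[A] ι → A, Function.Injective f := by
  classical
  have := Fintype.ofFinite ι
  obtain ⟨m, w, hw⟩ := Module.Finite.exists_fin (R := A) (M := M)
  obtain ⟨N, hN, hNw⟩ := exists_forall_mul_numeratorRingHom_mem_range hA Finset.univ
    (fun p : Fin m × ι => φ (w p.1) p.2)
  let J := LinearMap.compLeft (LinearMap.toSpanSingleton A A[A⁰⁻¹] 1) ι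
  have hJ : ∀ a i, J a i = numeratorRingHom (a i) := fun a i => by
    simp [J, OreLocalization.one_def, smul_oreDiv_one]
  have hJinj : Function.Injective J := fun a b h =>
    funext fun i => numeratorRingHom_injective (by rw [← hJ, ← hJ, h])
  let ψ := LinearMap.compLeft (LinearMap.mulRight A (numeratorRingHom N)) ι ∘ₗ φ
  have hψ : Function.Injective ψ := fun x y h => hφ <| funext fun i =>
    mul_right_cancel₀ (fun h0 => hN (numeratorRingHom_injective (h0.trans (map_zero _).symm)))
      (congrFun h i)
  have hrange : LinearMap.range ψ ≤ LinearMap.range J := by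
    rw [LinearMap.range_eq_map, ← hw, Submodule.map_span_le]
    rintro _ ⟨k, rfl⟩
    choose a ha using fun i => hNw (k, i) (Finset.mem_univ _)
    exact ⟨a, funext fun i => by rw [hJ, ha]; rfl⟩
  refine ⟨(LinearEquiv.ofInjective J hJinj).symm.toLinearMap ∘ₗ
    ψ.codRestrict _ fun x => hrange ⟨x, rfl⟩, ?_⟩
  exact (LinearEquiv.ofInjective J hJinj).symm.injective.comp
    ((LinearMap.injective_codRestrict_iff _).mpr hψ)

end RightOre

end OreLocalization

open OreLocalization nonZeroDivisors in
theorem exists_injective_linearMap_fin_rank {A : Type u} [Ring A] [IsDomain A] [OreSet A⁰]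
    (hA : RightOreCondition A) {M : Type u} [AddCommGroup M] [Module A M] [Module.Finite A M]
    [Module.IsTorsionFree A M] :
    ∃ n : ℕ, (n : Cardinal) = Module.rank A M ∧ ∃ f : M →ₗ[A] Fin n → A, Function.Injective f := by
  let b := Module.finBasis A[A⁰⁻¹] M[A⁰⁻¹]
  refine ⟨Module.finrank A[A⁰⁻¹] M[A⁰⁻¹], by rw [Module.finrank_eq_rank, rank_eq], ?_⟩
  exact exists_injective_linearMap_pi hA
    (b.equivFun.toLinearMap.restrictScalars A ∘ₗ mkLinearMap A⁰ M)
    (b.equivFun.injective.comp mkLinearMap_injective)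

theorem MonoidAlgebra.exists_eq_sum_single {R B : Type*} [Semiring R] (r : MonoidAlgebra R B) :
    ∃ (n : ℕ) (b : Fin n → B) (m : Fin n → R), Function.Injective b ∧
      r = ∑ j, MonoidAlgebra.single (b j) (m j) := by
  let e := r.coeff.support.equivFin
  refine ⟨_, fun j => e.symm j, fun j => r.coeff (e.symm j),
    Subtype.val_injective.comp e.symm.injective, ?_⟩
  conv_lhs => rw [← MonoidAlgebra.sum_coeff_single r]
  rw [Finsupp.sum, ← Finset.sum_coe_sort, ← e.symm.sum_comp]

theorem Subgroup.Normal.conj_zpow_mem_ofFn {G : Type*} [Group G] {H : Subgroup G} (hH : H.Normal)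
    {c : G} (hc : c ∈ H) {k : ℕ} (h : Fin k → G) (m : Fin k → ℤ) :
    ∀ x ∈ List.ofFn fun j => ((h j)⁻¹ * c * h j) ^ m j, x ∈ H :=
  List.forall_mem_ofFn_iff.mpr fun j => zpow_mem (hH.conj_mem' c hc (h j)) _

section Cocycle

variable {G : Type*} [Group G] {C : Subgroup G} [C.Normal]
  {D : Type*} [AddCommGroup D] [Module (MonoidAlgebra ℤ (G ⧸ C))ᵐᵒᵖ D]

variable (C) in
def IsCocycle (d : G → D) : Prop :=
  ∀ g h : G, d (g * h) = MulOpposite.op (MonoidAlgebra.of ℤ (G ⧸ C) ((h : G ⧸ C))) • d g + d h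

namespace IsCocycle

variable {d : G → D} (hd : IsCocycle C d)
include hd

theorem map_one : d 1 = 0 := by
  have h := hd 1 1
  rwa [mul_one, QuotientGroup.mk_one, _root_.map_one, MulOpposite.op_one, one_smul,
    left_eq_add] at h

theorem map_inv (g : G) :
    d g⁻¹ = -(MulOpposite.op (MonoidAlgebra.of ℤ (G ⧸ C) ((g⁻¹ : G) : G ⧸ C)) • d g) := by
  rw [eq_neg_iff_add_eq_zero, add_comm, ← hd, mul_inv_cancel, hd.map_one]

theorem map_mul_of_mem (g : G) {c : G} (hc : c ∈ C) : d (g * c) = d g + d c := by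
  rw [hd, (QuotientGroup.eq_one_iff c).mpr hc, _root_.map_one, MulOpposite.op_one, one_smul]

theorem map_zpow_of_mem {c : G} (hc : c ∈ C) (z : ℤ) : d (c ^ z) = z • d c := by
  induction z using Int.induction_on with
  | zero => simp [hd.map_one]
  | succ k ih => rw [zpow_add_one, hd.map_mul_of_mem _ hc, ih, add_smul, one_smul]
  | pred k ih =>
    rw [zpow_sub_one, hd.map_mul_of_mem _ (inv_mem hc), ih, hd.map_inv,
      (QuotientGroup.eq_one_iff _).mpr (inv_mem hc), _root_.map_one, MulOpposite.op_one, one_smul,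
      sub_smul, one_smul, sub_eq_add_neg]

theorem map_conj_of_mem {c : G} (hc : c ∈ C) (u : G) :
    d (u⁻¹ * c * u) = MulOpposite.op (MonoidAlgebra.of ℤ (G ⧸ C) (u : G ⧸ C)) • d c := by
  have h := hd u⁻¹ u
  rw [inv_mul_cancel, hd.map_one] at h
  rw [hd, hd.map_mul_of_mem _ hc, smul_add, add_right_comm, ← h, zero_add]

theorem map_list_prod_of_mem (L : List G) (hL : ∀ x ∈ L, x ∈ C) : d L.prod = (L.map d).sum := by
  induction L with
  | nil => exact hd.map_one
  | cons a L ih =>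
    have hL' : ∀ x ∈ L, x ∈ C := fun x hx => hL x (List.mem_cons_of_mem _ hx)
    rw [List.prod_cons, hd.map_mul_of_mem _ (C.list_prod_mem hL'), ih hL', List.map_cons,
      List.sum_cons]

theorem map_list_prod_conj_zpow {c : G} (hc : c ∈ C) {k : ℕ} (h : Fin k → G) (m : Fin k → ℤ) :
    d (List.ofFn fun j => ((h j)⁻¹ * c * h j) ^ m j).prod =
      MulOpposite.op (∑ j, MonoidAlgebra.single (h j : G ⧸ C) (m j)) • d c := by
  rw [hd.map_list_prod_of_mem _ (Subgroup.Normal.conj_zpow_mem_ofFn ‹_› hc h m), List.map_ofFn,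
    List.sum_ofFn, Finset.op_sum, Finset.sum_smul]
  refine Finset.sum_congr rfl fun j _ => ?_
  rw [Function.comp_apply, hd.map_zpow_of_mem (Subgroup.Normal.conj_mem' ‹_› c hc (h j)),
    hd.map_conj_of_mem hc, MonoidAlgebra.of_apply, ← smul_assoc, ← MulOpposite.op_smul,
    MonoidAlgebra.smul_single, smul_eq_mul, mul_one]

theorem span_range_comp_eq_top {ι : Type*} {g : ι → G}
    (hgen : Subgroup.closure (Set.range g) = ⊤)
    (hspan : Submodule.span (MonoidAlgebra ℤ (G ⧸ C))ᵐᵒᵖ (Set.range d) = ⊤) :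
    Submodule.span (MonoidAlgebra ℤ (G ⧸ C))ᵐᵒᵖ (Set.range (d ∘ g)) = ⊤ := by
  rw [eq_top_iff, ← hspan, Submodule.span_le]
  rintro _ ⟨x, rfl⟩
  have hx : x ∈ Subgroup.closure (Set.range g) := hgen ▸ Subgroup.mem_top x
  induction hx using Subgroup.closure_induction with
  | mem _ hx =>
    obtain ⟨k, rfl⟩ := hx
    exact Submodule.subset_span ⟨k, rfl⟩
  | one => exact hd.map_one ▸ Submodule.zero_mem _
  | mul a b _ _ ha hb => exact hd a b ▸ Submodule.add_mem _ (Submodule.smul_mem _ _ ha) hb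
  | inv a _ ha => exact hd.map_inv a ▸ Submodule.neg_mem _ (Submodule.smul_mem _ _ ha)

end IsCocycle

end Cocycle

section Splitting

variable {G : Type*} [Group G] {C : Subgroup G} [C.Normal]
  {D : Type*} [AddCommGroup D] [Module (MonoidAlgebra ℤ (G ⧸ C))ᵐᵒᵖ D] {d : G → D}
  {σ : D →ₗ[(MonoidAlgebra ℤ (G ⧸ C))ᵐᵒᵖ] MonoidAlgebra ℤ (G ⧸ C)}

theorem IsMatrixSplitting.isTorsionFree (hsplit : IsMatrixSplitting C d σ)
    (hdom : ∀ a b : MonoidAlgebra ℤ (G ⧸ C), a * b = 0 → a = 0 ∨ b = 0)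
    (hTF : ConjTorsionFree C) : Module.IsTorsionFree (MonoidAlgebra ℤ (G ⧸ C))ᵐᵒᵖ D := by
  obtain ⟨hinj, hd : IsCocycle C d, -, -, -, hker⟩ := hsplit
  refine .of_smul_eq_zero fun a x hax => or_iff_not_imp_left.mpr fun ha => ?_
  have hσ : σ x * a.unop = 0 := by
    rw [← MulOpposite.smul_eq_mul_unop, ← map_smul, hax, map_zero]
  obtain ⟨c, hc, rfl⟩ := (hker x).mp <|
    (hdom _ _ hσ).resolve_right fun h => ha ((MulOpposite.unop_eq_zero_iff a).mp h)
  obtain ⟨k, b, m, hb, hab⟩ := a.unop.exists_eq_sum_single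
  set P := (List.ofFn fun j => ((b j).out⁻¹ * c * (b j).out) ^ m j).prod
  have hdP : d P = 0 := by
    rw [hd.map_list_prod_conj_zpow hc]
    simpa only [QuotientGroup.out_eq', ← hab, MulOpposite.op_unop] using hax
  have hP : P = 1 := by
    have hPC : P ∈ C := C.list_prod_mem (Subgroup.Normal.conj_zpow_mem_ofFn ‹_› hc _ m)
    exact hinj (Prod.ext ((QuotientGroup.eq_one_iff P).mpr hPC) (hdP.trans hd.map_one.symm))
  have hc1 : c = 1 := by
    refine hTF c hc k (fun j => (b j).out) m (fun j l hjl hmem => hjl (hb ?_)) ?_ hP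
    · simpa using QuotientGroup.eq.mpr hmem
    · by_contra! h0
      exact ha ((MulOpposite.unop_eq_zero_iff a).mp (by simp [hab, h0]))
  rw [hc1, hd.map_one]

end Splitting

theorem stmt10_general {G : Type} [Group G] (m : ℕ) (g : Fin m → G)
    (hgen : Subgroup.closure (Set.range g) = ⊤)
    (C : Subgroup G) [C.Normal]
    (hOre : IsOreDomain (MonoidAlgebra ℤ (G ⧸ C)))
    (hTF : ConjTorsionFree C)
    (D : Type) [AddCommGroup D] [Module (MonoidAlgebra ℤ (G ⧸ C))ᵐᵒᵖ D]
    (d : G → D) (σ : D →ₗ[(MonoidAlgebra ℤ (G ⧸ C))ᵐᵒᵖ] MonoidAlgebra ℤ (G ⧸ C))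
    (hsplit : IsMatrixSplitting C d σ) :
    ∃ n : ℕ, (n : Cardinal) = Module.rank (MonoidAlgebra ℤ (G ⧸ C))ᵐᵒᵖ D ∧
      ∃ (β : G →* G ⧸ C) (t : G → (Fin n → MonoidAlgebra ℤ (G ⧸ C))),
        (∀ x y : G, t (x * y) =
          MulOpposite.op (MonoidAlgebra.of ℤ (G ⧸ C) (β y)) • t x + t y) ∧
        Function.Injective (fun x : G => (β x, t x)) := by
  have hd : IsCocycle C d := hsplit.2.1
  have := hOre.op.isDomain
  let := hOre.op.nonempty_oreSet.some
  have := hsplit.isTorsionFree hOre.1 hTF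
  have : Module.Finite _ D :=
    ⟨Submodule.fg_def.mpr ⟨_, Set.finite_range _, hd.span_range_comp_eq_top hgen hsplit.2.2.1⟩⟩
  obtain ⟨n, hn, f, hf⟩ := exists_injective_linearMap_fin_rank hOre.op.2.1 (M := D)
  refine ⟨n, hn, QuotientGroup.mk' C, fun x i => (f (d x) i).unop, fun x y => ?_, ?_⟩
  · funext i
    simp [hd x y, MulOpposite.smul_eq_mul_unop]
  · intro x y hxy
    obtain ⟨hβ, ht⟩ := Prod.ext_iff.mp hxy
    have hdxy : d x = d y := hf (funext fun i => MulOpposite.unop_injective (congrFun ht i))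
    exact hsplit.1 (Prod.ext hβ hdxy)

theorem stmt10 {G : Type} [Group G] (m : ℕ) (g : Fin m → G)
    (hgen : Subgroup.closure (Set.range g) = ⊤)
    (C : Subgroup G) [C.Normal] (habel : ∀ x ∈ C, ∀ y ∈ C, x * y = y * x)
    (hC : C ≠ ⊤)
    (hOre : IsOreDomain (MonoidAlgebra ℤ (G ⧸ C)))
    (hTF : ConjTorsionFree C)
    (D : Type) [AddCommGroup D] [Module (MonoidAlgebra ℤ (G ⧸ C))ᵐᵒᵖ D]
    (d : G → D) (σ : D →ₗ[(MonoidAlgebra ℤ (G ⧸ C))ᵐᵒᵖ] MonoidAlgebra ℤ (G ⧸ C))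
    (hsplit : IsMatrixSplitting C d σ) :
    ∃ n : ℕ, (n : Cardinal) = Module.rank (MonoidAlgebra ℤ (G ⧸ C))ᵐᵒᵖ D ∧
      ∃ (β : G →* G ⧸ C) (t : G → (Fin n → MonoidAlgebra ℤ (G ⧸ C))),
        (∀ x y : G, t (x * y) =
          MulOpposite.op (MonoidAlgebra.of ℤ (G ⧸ C) (β y)) • t x + t y) ∧
        Function.Injective (fun x : G => (β x, t x)) :=
  stmt10_general m g hgen C hOre hTF D d σ hsplit
end
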